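/- For fixed t > 0 and λ > 0, the unique solution p(λ; t, σ) of the stationarity equation is strictly increasing in the noise power σ: if 0 < σ₁ < σ₂ then p(λ; t, σ₁) < p(λ; t, σ₂). -/

import Mathlib

open BigOperators

/-- `p` solves the stationarity equation
`(t/(2σ)) · ((1/2)·ln(1 + p/σ) − t)^{−2} · (1 + p/σ)^{−1} = λ` on the domain
`p > σ(e^{2t} − 1)`; this characterizes the unique solution `p(λ; t, σ)`. -/
def IsStatSol (t σ lam p : ℝ) : Prop :=
  σ * (Real.exp (2 * t) - 1) < p ∧
    t / (2 * σ) / ((1 / 2) * Real.log (1 + p / σ) - t) ^ 2 / (1 + p / σ) = lam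

/-!
Put `u = 1 + p / σ` and `D(u) = (log u / 2 - t)² u`. The equation says `σ D(u) = t / (2λ) =: c`,
so `p = σ (u - 1) = c / (D(u) / (u - 1))`. Both `D` and `D(u) / (u - 1)` increase on
`u > e^{2t}` (the latter because its derivative has the sign of `u - 1 - (log u / 2 - t) > 0`).
A larger `σ` forces a smaller `D(u)`, hence a smaller `u`, a smaller `D(u) / (u - 1)` and a
larger `p`.
-/

open Real Set

/-- With `u = 1 + p / σ`, the stationarity equation reads `t / (2 * (σ * statDenom t u)) = λ`. -/
noncomputable def statDenom (t u : ℝ) : ℝ := (log u / 2 - t) ^ 2 * u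

section
variable {t u : ℝ}

lemma statDenom_pos (hu : exp (2 * t) < u) : 0 < statDenom t u := by
  have hu0 : 0 < u := (exp_pos _).trans hu
  have : 2 * t < log u := (lt_log_iff_exp_lt hu0).2 hu
  unfold statDenom
  have : 0 < log u / 2 - t := by linarith
  positivity

lemma statDenom_strictMonoOn (t : ℝ) : StrictMonoOn (statDenom t) (Ioi (exp (2 * t))) := by
  intro a ha b _ hab
  have ha0 : 0 < a := (exp_pos _).trans ha
  have hA : 0 < log a / 2 - t := by
    have := (lt_log_iff_exp_lt ha0).2 ha; linarith
  have hlog : log a < log b := log_lt_log ha0 hab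
  unfold statDenom
  gcongr

lemma hasDerivAt_statDenom_div (hu0 : u ≠ 0) (hu1 : u ≠ 1) :
    HasDerivAt (fun u => statDenom t u / (u - 1))
      ((log u / 2 - t) * (u - 1 - (log u / 2 - t)) / (u - 1) ^ 2) u := by
  have hA : HasDerivAt (fun u => log u / 2 - t) (u⁻¹ / 2) u :=
    ((hasDerivAt_log hu0).div_const 2).sub_const t
  refine (((hA.fun_pow 2).fun_mul (hasDerivAt_id' u)).fun_div ((hasDerivAt_id' u).sub_const 1)
    (sub_ne_zero.2 hu1)).congr_deriv ?_
  field_simp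
  ring

lemma statDenom_div_strictMonoOn (ht : 0 ≤ t) :
    StrictMonoOn (fun u => statDenom t u / (u - 1)) (Ioi (exp (2 * t))) := by
  have hderiv : ∀ u ∈ Ioi (exp (2 * t)), HasDerivAt (fun u => statDenom t u / (u - 1))
      ((log u / 2 - t) * (u - 1 - (log u / 2 - t)) / (u - 1) ^ 2) u := fun u hu =>
    hasDerivAt_statDenom_div ((exp_pos _).trans hu).ne' ((one_le_exp (by linarith)).trans_lt hu).ne'
  refine strictMonoOn_of_deriv_pos (convex_Ioi _)
    (fun u hu => (hderiv u hu).continuousAt.continuousWithinAt) fun u hu => ?_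
  rw [interior_Ioi] at hu
  rw [(hderiv u hu).deriv]
  have hu1 : 1 < u := (one_le_exp (by linarith)).trans_lt hu
  have hA : 0 < log u / 2 - t := by
    have := (lt_log_iff_exp_lt (by linarith)).2 hu; linarith
  have hlog : log u < u - 1 := log_lt_sub_one_of_pos (by linarith) hu1.ne'
  have : 0 < u - 1 - (log u / 2 - t) := by nlinarith [log_pos hu1]
  have : 0 < u - 1 := by linarith
  positivity

variable {σ lam p : ℝ}

lemma IsStatSol.exp_lt (hσ : 0 < σ) (h : IsStatSol t σ lam p) : exp (2 * t) < 1 + p / σ := by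
  have : exp (2 * t) - 1 < p / σ := by
    rw [lt_div_iff₀ hσ, mul_comm]
    exact h.1
  linarith

lemma IsStatSol.mul_statDenom_eq (ht : t ≠ 0) (hσ : 0 < σ) (h : IsStatSol t σ lam p) :
    σ * statDenom t (1 + p / σ) = t / (2 * lam) := by
  have hD := statDenom_pos (h.exp_lt hσ)
  rw [← h.2]
  unfold statDenom at *
  field_simp

lemma IsStatSol.eq_div (ht : t ≠ 0) (hσ : 0 < σ) (h : IsStatSol t σ lam p) :
    p = t / (2 * lam) / (statDenom t (1 + p / σ) / (1 + p / σ - 1)) := by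
  have hD := statDenom_pos (h.exp_lt hσ)
  rw [← h.mul_statDenom_eq ht hσ, mul_div_assoc, div_div_cancel₀ hD.ne', add_sub_cancel_left,
    mul_div_cancel₀ p hσ.ne']
end

theorem statSol_strictMono_in_noise_general (t lam σ₁ σ₂ p₁ p₂ : ℝ)
    (ht : 0 < t) (hσ₁ : 0 < σ₁) (hσ : σ₁ < σ₂)
    (h₁ : IsStatSol t σ₁ lam p₁) (h₂ : IsStatSol t σ₂ lam p₂) :
    p₁ < p₂ := by
  have hσ₂ : 0 < σ₂ := hσ₁.trans hσ
  have hu₁ := h₁.exp_lt hσ₁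
  have hu₂ := h₂.exp_lt hσ₂
  have hD₁ := h₁.mul_statDenom_eq ht.ne' hσ₁
  have hD₂ := h₂.mul_statDenom_eq ht.ne' hσ₂
  have hpos := statDenom_pos hu₂
  have hu : 1 + p₂ / σ₂ < 1 + p₁ / σ₁ :=
    ((statDenom_strictMonoOn t).lt_iff_lt hu₂ hu₁).1 (by nlinarith)
  calc p₁ = t / (2 * lam) / (statDenom t (1 + p₁ / σ₁) / (1 + p₁ / σ₁ - 1)) :=
        h₁.eq_div ht.ne' hσ₁
    _ < t / (2 * lam) / (statDenom t (1 + p₂ / σ₂) / (1 + p₂ / σ₂ - 1)) := by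
        have hp₂ : 0 < 1 + p₂ / σ₂ - 1 := by linarith [one_le_exp (by linarith : 0 ≤ 2 * t)]
        refine div_lt_div_of_pos_left (by rw [← hD₂]; positivity) (by positivity) ?_
        exact statDenom_div_strictMonoOn ht.le hu₂ hu₁ hu
    _ = p₂ := (h₂.eq_div ht.ne' hσ₂).symm

/-- For fixed `t > 0` and `λ > 0`, the unique solution `p(λ; t, σ)` of
the stationarity equation is strictly increasing in the noise power `σ`:
if `0 < σ₁ < σ₂` then `p(λ; t, σ₁) < p(λ; t, σ₂)`. -/
theorem statSol_strictMono_in_noise (t lam σ₁ σ₂ p₁ p₂ : ℝ)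
    (ht : 0 < t) (hlam : 0 < lam) (hσ₁ : 0 < σ₁) (hσ : σ₁ < σ₂)
    (h₁ : IsStatSol t σ₁ lam p₁) (h₂ : IsStatSol t σ₂ lam p₂) :
    p₁ < p₂ :=
  statSol_strictMono_in_noise_general t lam σ₁ σ₂ p₁ p₂ ht hσ₁ hσ h₁ h₂
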